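/- If 𝐗 = (X; Y) is a frame for a Lagrangian subspace of ℝ^{2n} and M² := (XᵀX + YᵀY)⁻¹, then X M² Xᵀ + Y M² Yᵀ = Iₙ and X M² Yᵀ − Y M² Xᵀ = 0. -/

import Mathlib

open Matrix

noncomputable section

/-- The standard symplectic matrix `J = [[0, -I],[I, 0]]` on `ℝ^{2n}`,
with `ℝ^{2n}` modeled as `Fin n ⊕ Fin n → ℝ`. -/
def Jmat (n : ℕ) : Matrix (Fin n ⊕ Fin n) (Fin n ⊕ Fin n) ℝ :=
  Matrix.fromBlocks 0 (-1) 1 0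

/-- A subspace `ℓ ⊆ ℝ^{2n}` is Lagrangian if it has dimension `n` and
`(Jx, y) = 0` for all `x, y ∈ ℓ`. -/
def IsLagrangian (n : ℕ) (ℓ : Submodule ℝ (Fin n ⊕ Fin n → ℝ)) : Prop :=
  Module.finrank ℝ ℓ = n ∧ ∀ x ∈ ℓ, ∀ y ∈ ℓ, (Jmat n).mulVec x ⬝ᵥ y = 0

/-- A `2n × n` matrix `M` is a frame for the subspace `ℓ ⊆ ℝ^{2n}` if its
columns are linearly independent and span `ℓ` (i.e. form a basis of `ℓ`). -/
def IsFrameOf (n : ℕ) (M : Matrix (Fin n ⊕ Fin n) (Fin n) ℝ)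
    (ℓ : Submodule ℝ (Fin n ⊕ Fin n → ℝ)) : Prop :=
  LinearIndependent ℝ (fun j : Fin n => fun i => M i j) ∧
    Submodule.span ℝ (Set.range (fun j : Fin n => fun i => M i j)) = ℓ

/-- The `2n × n` matrix `𝐗 = (X; Y)` with `n × n` blocks `X` and `Y` stacked
vertically. -/
def vframe {n : ℕ} (X Y : Matrix (Fin n) (Fin n) ℝ) :
    Matrix (Fin n ⊕ Fin n) (Fin n) ℝ :=
  Matrix.fromRows X Y

/-- The complex matrix `X + iY` built from real matrices `X` and `Y`. -/
def cplx {n : ℕ} (X Y : Matrix (Fin n) (Fin n) ℝ) : Matrix (Fin n) (Fin n) ℂ :=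
  X.map (fun a => (a : ℂ)) + Complex.I • Y.map (fun a => (a : ℂ))

end

/-!
Let `F = (X; Y)` and `A = FᵀF`, invertible because the columns of `F` are independent. Isotropy
of `ℓ` says `(JF)ᵀF = 0`, and `J` is orthogonal, so the square matrix `U = (F | JF)` has
`UᵀU = diag(A, A)`. Hence `U diag(A⁻¹, A⁻¹) Uᵀ = 1`, i.e. `F A⁻¹ Fᵀ + JF A⁻¹ (JF)ᵀ = 1`: the
orthogonal projections onto `ℓ` and `Jℓ = ℓ^⊥` add up to the identity. Since `JF = (-Y; X)`,
the two identities are the upper blocks of this equation.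
-/

namespace Matrix

variable {m k R : Type*} [Fintype m]

theorem transpose_mul_mul_eq_zero_of_isotropic [CommSemiring R] {S : Matrix m m R}
    {F : Matrix m k R} {p : Submodule R (m → R)} (hF : ∀ j, F.col j ∈ p)
    (hp : ∀ x ∈ p, ∀ y ∈ p, S *ᵥ x ⬝ᵥ y = 0) : (S * F)ᵀ * F = 0 := by
  ext i j
  simp only [transpose_apply, mul_apply, zero_apply]
  exact hp _ (hF i) _ (hF j)

variable [Fintype k] [DecidableEq k]

theorem isUnit_transpose_mul_self_of_linearIndependent [Field R] [LinearOrder R]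
    [IsStrictOrderedRing R] {F : Matrix m k R} (hF : LinearIndependent R F.col) :
    IsUnit (Fᵀ * F) := by
  rw [← mulVec_injective_iff_isUnit, ← coe_mulVecLin, ← LinearMap.ker_eq_bot,
    ker_mulVecLin_transpose_mul_self, LinearMap.ker_eq_bot, coe_mulVecLin, mulVec_injective_iff]
  exact hF

variable [DecidableEq m]

theorem mul_inv_mul_transpose_add_eq_one [CommRing R] (e : m ≃ k ⊕ k) {F : Matrix m k R}
    {J : Matrix m m R} (hJ : Jᵀ * J = 1) (hiso : (J * F)ᵀ * F = 0) (hF : IsUnit (Fᵀ * F)) :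
    F * (Fᵀ * F)⁻¹ * Fᵀ + J * F * (Fᵀ * F)⁻¹ * (J * F)ᵀ = 1 := by
  have hinv : Fᵀ * F * (Fᵀ * F)⁻¹ = 1 := mul_nonsing_inv _ ((isUnit_iff_isUnit_det _).mp hF)
  have hiso' : Fᵀ * (J * F) = 0 := by
    simpa only [transpose_mul, transpose_transpose, transpose_zero] using congrArg transpose hiso
  have hJF : (J * F)ᵀ * (J * F) = Fᵀ * F := by
    rw [transpose_mul, Matrix.mul_assoc, ← Matrix.mul_assoc Jᵀ, hJ, Matrix.one_mul]
  have hleft : fromRows Fᵀ (J * F)ᵀ * fromCols (F * (Fᵀ * F)⁻¹) (J * F * (Fᵀ * F)⁻¹) = 1 := by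
    simp only [fromRows_mul_fromCols, ← Matrix.mul_assoc, hiso, hiso', hJF, hinv,
      Matrix.zero_mul, fromBlocks_one]
  rw [← fromCols_mul_fromRows_eq_one_comm e, fromCols_mul_fromRows] at hleft
  simpa only [Matrix.mul_assoc] using hleft

end Matrix

theorem Jmat_transpose_mul_self (n : ℕ) : (Jmat n)ᵀ * Jmat n = 1 := by
  simp [Jmat, fromBlocks_transpose, fromBlocks_multiply]

theorem Jmat_mul_vframe {n : ℕ} (X Y : Matrix (Fin n) (Fin n) ℝ) :
    Jmat n * vframe X Y = vframe (-Y) X := by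
  simp [Jmat, vframe, fromBlocks_mul_fromRows]

theorem vframe_transpose_mul_self {n : ℕ} (X Y : Matrix (Fin n) (Fin n) ℝ) :
    (vframe X Y)ᵀ * vframe X Y = Xᵀ * X + Yᵀ * Y := by
  rw [vframe, transpose_fromRows, fromCols_mul_fromRows]

theorem vframe_mul_mul_transpose {n : ℕ} (X Y M : Matrix (Fin n) (Fin n) ℝ) :
    vframe X Y * M * (vframe X Y)ᵀ =
      fromBlocks (X * M * Xᵀ) (X * M * Yᵀ) (Y * M * Xᵀ) (Y * M * Yᵀ) := by
  rw [vframe, transpose_fromRows, fromRows_mul, fromRows_mul_fromCols]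

/-- For a Lagrangian frame `(X; Y)` and `M² = (XᵀX + YᵀY)⁻¹`, one
has `X M² Xᵀ + Y M² Yᵀ = I` and `X M² Yᵀ - Y M² Xᵀ = 0`. -/
theorem lagrangian_frame_M_identities (n : ℕ) (X Y : Matrix (Fin n) (Fin n) ℝ)
    (ℓ : Submodule ℝ (Fin n ⊕ Fin n → ℝ)) (hℓ : IsLagrangian n ℓ)
    (hf : IsFrameOf n (vframe X Y) ℓ) :
    X * (Xᵀ * X + Yᵀ * Y)⁻¹ * Xᵀ + Y * (Xᵀ * X + Yᵀ * Y)⁻¹ * Yᵀ = 1 ∧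
      X * (Xᵀ * X + Yᵀ * Y)⁻¹ * Yᵀ - Y * (Xᵀ * X + Yᵀ * Y)⁻¹ * Xᵀ = 0 := by
  have hcols : ∀ j, (vframe X Y).col j ∈ ℓ := fun j => hf.2 ▸ Submodule.subset_span ⟨j, rfl⟩
  have key := mul_inv_mul_transpose_add_eq_one (Equiv.refl _) (Jmat_transpose_mul_self n)
    (transpose_mul_mul_eq_zero_of_isotropic hcols hℓ.2)
    (isUnit_transpose_mul_self_of_linearIndependent hf.1)
  rw [Jmat_mul_vframe, vframe_transpose_mul_self, vframe_mul_mul_transpose,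
    vframe_mul_mul_transpose, fromBlocks_add, ← fromBlocks_one, fromBlocks_inj] at key
  obtain ⟨hdiag, hoff, -, -⟩ := key
  simp only [transpose_neg, Matrix.mul_neg, Matrix.neg_mul, neg_neg] at hdiag hoff
  exact ⟨hdiag, by rwa [← sub_eq_add_neg] at hoff⟩
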